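/- arXiv:1602.05641 — 2 statements merged into one kernel-verified Lean document; each statement's English description precedes it below -/
import Mathlib

section
/- For any n₁, n₂ ∈ ℕ, P^1( Σ_{m=1}^{n₁+n₂} 1{X_m=1} = n₁, Σ_{m=1}^{n₁+n₂} 1{X_m=2} = n₂, X_{n₁+n₂} = 2 ) = Σ_{0 ≤ i ≤ n₁ ∧ (n₂−1)} d_{1,1}^{n₁−i} d_{1,2}^{i+1} · (n₁!/((n₁−i)! i!)) · d_{2,1}^{i} d_{2,2}^{n₂−i−1} · ((n₂−1)!/((n₂−i−1)! i!)). -/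
open MeasureTheory Filter Set

noncomputable section

namespace MCaux

def st (b : Bool) : ℕ := cond b 2 1

lemma st_ne_one_iff (b : Bool) : st b = 2 ↔ b = true := by cases b <;> simp [st]

def pf (n : ℕ) (s : Fin n → Bool) : ℕ → ℕ :=
  fun k => if h : 1 ≤ k ∧ k ≤ n then st (s ⟨k - 1, by omega⟩) else 1

lemma pf_zero (n : ℕ) (s : Fin n → Bool) : pf n s 0 = 1 := by simp [pf]

lemma pf_mem (n : ℕ) (s : Fin n → Bool) (k : ℕ) : pf n s k = 1 ∨ pf n s k = 2 := by
  unfold pf; split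
  · rcases s _ <;> simp [st]
  · left; rfl

lemma pf_succ (n : ℕ) (s : Fin n → Bool) (k : ℕ) (hk : k < n) :
    pf n s (k + 1) = st (s ⟨k, hk⟩) := by
  have h : 1 ≤ k + 1 ∧ k + 1 ≤ n := by omega
  simp only [pf, dif_pos h, Nat.add_sub_cancel]

lemma pf_last (n : ℕ) (hn : 1 ≤ n) (s : Fin n → Bool) :
    pf n s n = st (s ⟨n - 1, by omega⟩) := by
  unfold pf
  rw [dif_pos ⟨hn, le_rfl⟩]

def cnt (n : ℕ) (s : Fin n → Bool) : ℕ := ∑ k, if s k then 1 else 0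

variable (d : ℕ → ℕ → ℝ)

def W (n : ℕ) (s : Fin n → Bool) : ℝ :=
  ∏ k ∈ Finset.range n, d (pf n s k) (pf n s (k + 1))

def SA (m a : ℕ) : ℝ :=
  ∑ s : Fin m → Bool, if cnt m s = a ∧ pf m s m = 1 then W d m s else 0

def SB (m a : ℕ) : ℝ :=
  ∑ s : Fin m → Bool, if cnt m s = a ∧ pf m s m = 2 then W d m s else 0

lemma pf_snoc (m : ℕ) (t : Fin m → Bool) (b : Bool) (k : ℕ) (hk : k ≤ m) :
    pf (m + 1) (Fin.snoc t b) k = pf m t k := by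
  unfold pf
  rcases Nat.eq_zero_or_pos k with h0 | h1
  · subst h0; simp
  · have h : 1 ≤ k ∧ k ≤ m := ⟨h1, hk⟩
    have h' : 1 ≤ k ∧ k ≤ m + 1 := by omega
    rw [dif_pos h, dif_pos h']
    have : (⟨k - 1, by omega⟩ : Fin (m + 1)) = Fin.castSucc ⟨k - 1, by omega⟩ := rfl
    rw [this, Fin.snoc_castSucc]

lemma pf_snoc_last (m : ℕ) (t : Fin m → Bool) (b : Bool) :
    pf (m + 1) (Fin.snoc t b) (m + 1) = st b := by
  have h : 1 ≤ m + 1 ∧ m + 1 ≤ m + 1 := by omega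
  unfold pf
  rw [dif_pos h]
  have : (⟨m + 1 - 1, by omega⟩ : Fin (m + 1)) = Fin.last m := rfl
  rw [this, Fin.snoc_last]

lemma cnt_snoc (m : ℕ) (t : Fin m → Bool) (b : Bool) :
    cnt (m + 1) (Fin.snoc t b) = cnt m t + (if b then 1 else 0) := by
  unfold cnt
  rw [Fin.sum_univ_castSucc]
  simp

lemma W_snoc (m : ℕ) (t : Fin m → Bool) (b : Bool) :
    W d (m + 1) (Fin.snoc t b) = W d m t * d (pf m t m) (st b) := by
  unfold W
  rw [Finset.prod_range_succ, pf_snoc m t b m le_rfl, pf_snoc_last]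
  congr 1
  refine Finset.prod_congr rfl fun k hk => ?_
  have hk' := Finset.mem_range.mp hk
  rw [pf_snoc m t b k hk'.le, pf_snoc m t b (k + 1) (by omega)]

lemma sum_snoc (m : ℕ) (F : (Fin (m + 1) → Bool) → ℝ) :
    ∑ s : Fin (m + 1) → Bool, F s =
      ∑ t : Fin m → Bool, (F (Fin.snoc t false) + F (Fin.snoc t true)) := by
  rw [← Equiv.sum_comp (Fin.snocEquiv (fun _ => Bool)) F, Fintype.sum_prod_type_right]
  simp only [Fin.snocEquiv, Equiv.coe_fn_mk, Fintype.sum_bool]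
  exact Finset.sum_congr rfl fun t _ => add_comm _ _

lemma SB_succ_zero (m : ℕ) : SB d (m + 1) 0 = 0 := by
  unfold SB
  rw [sum_snoc]
  apply Finset.sum_eq_zero
  intro t _
  rw [cnt_snoc, cnt_snoc, pf_snoc_last, pf_snoc_last]
  simp [st]

lemma SB_succ (m a : ℕ) : SB d (m + 1) (a + 1) = SA d m a * d 1 2 + SB d m a * d 2 2 := by
  unfold SB SA
  rw [sum_snoc]
  have key : ∀ t : Fin m → Bool,
      ((if cnt (m + 1) (Fin.snoc t false) = a + 1 ∧ pf (m + 1) (Fin.snoc t false) (m + 1) = 2 then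
          W d (m + 1) (Fin.snoc t false) else 0) +
        (if cnt (m + 1) (Fin.snoc t true) = a + 1 ∧ pf (m + 1) (Fin.snoc t true) (m + 1) = 2 then
          W d (m + 1) (Fin.snoc t true) else 0)) =
      (if cnt m t = a ∧ pf m t m = 1 then W d m t else 0) * d 1 2 +
        (if cnt m t = a ∧ pf m t m = 2 then W d m t else 0) * d 2 2 := by
    intro t
    rw [cnt_snoc, cnt_snoc, pf_snoc_last, pf_snoc_last, W_snoc, W_snoc]
    rcases pf_mem m t m with h | h <;> rw [h] <;>
      by_cases hc : cnt m t = a <;>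
        norm_num [st, hc] <;> ring
  rw [Finset.sum_congr rfl fun t _ => key t, Finset.sum_add_distrib,
    ← Finset.sum_mul, ← Finset.sum_mul]

lemma SA_succ (m a : ℕ) : SA d (m + 1) a = SA d m a * d 1 1 + SB d m a * d 2 1 := by
  unfold SB SA
  rw [sum_snoc]
  have key : ∀ t : Fin m → Bool,
      ((if cnt (m + 1) (Fin.snoc t false) = a ∧ pf (m + 1) (Fin.snoc t false) (m + 1) = 1 then
          W d (m + 1) (Fin.snoc t false) else 0) +
        (if cnt (m + 1) (Fin.snoc t true) = a ∧ pf (m + 1) (Fin.snoc t true) (m + 1) = 1 then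
          W d (m + 1) (Fin.snoc t true) else 0)) =
      (if cnt m t = a ∧ pf m t m = 1 then W d m t else 0) * d 1 1 +
        (if cnt m t = a ∧ pf m t m = 2 then W d m t else 0) * d 2 1 := by
    intro t
    rw [cnt_snoc, cnt_snoc, pf_snoc_last, pf_snoc_last, W_snoc, W_snoc]
    rcases pf_mem m t m with h | h <;> rw [h] <;>
      by_cases hc : cnt m t = a <;>
        norm_num [st, hc] <;> ring
  rw [Finset.sum_congr rfl fun t _ => key t, Finset.sum_add_distrib,
    ← Finset.sum_mul, ← Finset.sum_mul]


def Ac (m a : ℕ) : ℝ :=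
  if m < a then 0 else if a = 0 then d 1 1 ^ m
  else ∑ i ∈ Finset.range m,
    d 1 1 ^ (m - a - (i + 1)) * d 1 2 ^ (i + 1) * ((m - a).choose (i + 1) : ℝ) *
      (d 2 1 ^ (i + 1) * d 2 2 ^ (a - 1 - i) * ((a - 1).choose i : ℝ))

def Bc (m a : ℕ) : ℝ :=
  if a = 0 ∨ m < a then 0
  else ∑ i ∈ Finset.range m,
    d 1 1 ^ (m - a - i) * d 1 2 ^ (i + 1) * ((m - a).choose i : ℝ) *
      (d 2 1 ^ i * d 2 2 ^ (a - 1 - i) * ((a - 1).choose i : ℝ))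

lemma Bc_rec (m a : ℕ) : Bc d (m + 1) (a + 1) = d 1 2 * Ac d m a + d 2 2 * Bc d m a := by
  by_cases ham : a ≤ m
  case neg =>
    have h1 : a + 1 = 0 ∨ m + 1 < a + 1 := by omega
    have h2 : m < a := by omega
    have h3 : a = 0 ∨ m < a := by omega
    simp [Ac, Bc, h1, h2, h3]
  have hg : ¬(a + 1 = 0 ∨ m + 1 < a + 1) := by omega
  rw [Bc, if_neg hg]
  have hsub : m + 1 - (a + 1) = m - a := by omega
  have hsub2 : a + 1 - 1 = a := by omega
  simp only [hsub, hsub2]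
  rcases Nat.eq_zero_or_pos a with rfl | ha
  · rw [Finset.sum_eq_single_of_mem 0 (Finset.mem_range.mpr (by omega))]
    · simp [Ac, Bc]; ring
    · intro i _ hi
      have h0 : (0 - 1 : ℕ).choose i = 0 := Nat.choose_eq_zero_of_lt (by omega)
      simp [h0]
  · -- 1 ≤ a ≤ m
    have hm1 : 1 ≤ m := le_trans ha ham
    have hAc : d 1 2 * Ac d m a =
        ∑ i ∈ Finset.range (m + 1),
          (if i = 0 then 0 else
            d 1 2 * (d 1 1 ^ (m - a - i) * d 1 2 ^ i * ((m - a).choose i : ℝ) *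
              (d 2 1 ^ i * d 2 2 ^ (a - 1 - (i - 1)) * ((a - 1).choose (i - 1) : ℝ)))) := by
      rw [Finset.sum_range_succ']
      simp only [Nat.add_sub_cancel, Nat.succ_ne_zero, if_false, if_true, eq_self_iff_true,
        add_zero]
      rw [Ac, if_neg (by omega), if_neg (by omega), Finset.mul_sum]
    have hBc : d 2 2 * Bc d m a =
        ∑ i ∈ Finset.range (m + 1),
          d 2 2 * (d 1 1 ^ (m - a - i) * d 1 2 ^ (i + 1) * ((m - a).choose i : ℝ) *
            (d 2 1 ^ i * d 2 2 ^ (a - 1 - i) * ((a - 1).choose i : ℝ))) := by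
      rw [Finset.sum_range_succ]
      have hz : (m - a).choose m = 0 := Nat.choose_eq_zero_of_lt (by omega)
      rw [hz]
      rw [Bc, if_neg (by omega), Finset.mul_sum]
      push_cast
      ring
    rw [hAc, hBc, ← Finset.sum_add_distrib]
    refine Finset.sum_congr rfl fun i _ => ?_
    rcases i with _ | j
    · simp only [if_pos rfl, zero_add, Nat.sub_zero, pow_zero, Nat.choose_zero_right,
        Nat.choose_self]
      have e : a = (a - 1) + 1 := by omega
      rw [e, pow_succ]
      have : a - 1 + 1 - 1 - 0 = a - 1 := by omega
      rw [this]
      push_cast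
      ring
    · simp only [if_neg (Nat.succ_ne_zero _), Nat.add_sub_cancel]
      have pascal : a.choose (j + 1) = (a - 1).choose j + (a - 1).choose (j + 1) := by
        conv_lhs => rw [show a = (a - 1) + 1 by omega]
        exact Nat.choose_succ_succ _ _
      rw [pascal]
      have he : a - (j + 1) = a - 1 - j := by omega
      rw [he]
      by_cases hj : j + 2 ≤ a
      · have e2 : a - 1 - j = (a - 1 - (j + 1)) + 1 := by omega
        rw [e2, pow_succ]
        push_cast
        ring
      · have h1 : (a - 1).choose (j + 1) = 0 := Nat.choose_eq_zero_of_lt (by omega)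
        rw [h1]
        push_cast
        ring

lemma Ac_rec (m a : ℕ) : Ac d (m + 1) a = d 1 1 * Ac d m a + d 2 1 * Bc d m a := by
  rcases Nat.eq_zero_or_pos a with rfl | ha
  · simp [Ac, Bc, pow_succ]; ring
  by_cases ham : a ≤ m
  case neg =>
    -- a ≥ m + 1
    by_cases hma : a = m + 1
    · subst hma
      have hA : Ac d m (m + 1) = 0 := by rw [Ac, if_pos (by omega)]
      have hB : Bc d m (m + 1) = 0 := by rw [Bc, if_pos (by omega)]
      rw [hA, hB, Ac, if_neg (by omega), if_neg (by omega)]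
      rw [Finset.sum_eq_zero]
      · ring
      · intro i _
        have : (m + 1 - (m + 1)).choose (i + 1) = 0 := by
          simp [Nat.choose_eq_zero_of_lt]
        rw [this]
        push_cast
        ring
    · have hA : Ac d (m + 1) a = 0 := by rw [Ac, if_pos (by omega)]
      have hA2 : Ac d m a = 0 := by rw [Ac, if_pos (by omega)]
      have hB2 : Bc d m a = 0 := by rw [Bc, if_pos (by omega)]
      rw [hA, hA2, hB2]; ring
  · -- 1 ≤ a ≤ m
    rw [Ac, if_neg (by omega), if_neg (by omega)]
    have hsub : m + 1 - a = (m - a) + 1 := by omega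
    simp only [hsub]
    have hAc : d 1 1 * Ac d m a =
        ∑ i ∈ Finset.range (m + 1),
          d 1 1 * (d 1 1 ^ (m - a - (i + 1)) * d 1 2 ^ (i + 1) * ((m - a).choose (i + 1) : ℝ) *
            (d 2 1 ^ (i + 1) * d 2 2 ^ (a - 1 - i) * ((a - 1).choose i : ℝ))) := by
      rw [Finset.sum_range_succ]
      have hz : (m - a).choose (m + 1) = 0 := Nat.choose_eq_zero_of_lt (by omega)
      rw [hz, Ac, if_neg (by omega), if_neg (by omega), Finset.mul_sum]
      push_cast
      ring
    have hBc : d 2 1 * Bc d m a =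
        ∑ i ∈ Finset.range (m + 1),
          d 2 1 * (d 1 1 ^ (m - a - i) * d 1 2 ^ (i + 1) * ((m - a).choose i : ℝ) *
            (d 2 1 ^ i * d 2 2 ^ (a - 1 - i) * ((a - 1).choose i : ℝ))) := by
      rw [Finset.sum_range_succ]
      have hz : (m - a).choose m = 0 := Nat.choose_eq_zero_of_lt (by omega)
      rw [hz, Bc, if_neg (by omega), Finset.mul_sum]
      push_cast
      ring
    rw [hAc, hBc, ← Finset.sum_add_distrib]
    refine Finset.sum_congr rfl fun i _ => ?_
    have pascal : ((m - a) + 1).choose (i + 1) = (m - a).choose i + (m - a).choose (i + 1) :=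
      Nat.choose_succ_succ _ _
    rw [pascal]
    have he : (m - a) + 1 - (i + 1) = m - a - i := by omega
    rw [he]
    by_cases hi : i + 1 ≤ m - a
    · have e2 : m - a - i = (m - a - (i + 1)) + 1 := by omega
      rw [e2, pow_succ]
      push_cast
      ring
    · have h1 : (m - a).choose (i + 1) = 0 := Nat.choose_eq_zero_of_lt (by omega)
      rw [h1]
      push_cast
      ring

lemma SA_SB_eq (m : ℕ) : ∀ a, SA d m a = Ac d m a ∧ SB d m a = Bc d m a := by
  induction m with
  | zero =>
    intro a
    constructor
    · rw [SA, Finset.sum_congr rfl (fun s _ => show _ = (if 0 = a then (1:ℝ) else 0) from by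
        simp only [cnt, Finset.univ_eq_empty, Finset.sum_empty, pf_zero, W,
          Finset.range_zero, Finset.prod_empty, and_true]),
        Finset.sum_const]
      have hcard : (Finset.univ : Finset (Fin 0 → Bool)).card = 1 := by simp
      rw [hcard, one_smul]
      rcases a with _ | a
      · simp [Ac]
      · rw [Ac, if_pos (Nat.succ_pos a)]
        simp
    · rw [SB]
      rw [Finset.sum_eq_zero]
      · rw [Bc, if_pos (by omega)]
      · intro s _
        rw [if_neg]
        rw [pf_zero]
        omega
  | succ m ih =>
    intro a
    constructor
    · rw [SA_succ, (ih a).1, (ih a).2, Ac_rec]; ring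
    · rcases a with _ | a
      · rw [SB_succ_zero, Bc, if_pos (Or.inl rfl)]
      · rw [SB_succ, (ih a).1, (ih a).2, Bc_rec]; ring


lemma SB_closed (n₁ n₂ : ℕ) (h1 : 1 ≤ n₁) (h2 : 1 ≤ n₂) :
    SB d (n₁ + n₂) n₂ =
      ∑ i ∈ Finset.range (min n₁ (n₂ - 1) + 1),
        d 1 1 ^ (n₁ - i) * d 1 2 ^ (i + 1) *
          ((n₁.factorial : ℝ) / ((n₁ - i).factorial * i.factorial)) *
        (d 2 1 ^ i * d 2 2 ^ (n₂ - i - 1) *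
          (((n₂ - 1).factorial : ℝ) / ((n₂ - i - 1).factorial * i.factorial))) := by
  rw [(SA_SB_eq d (n₁ + n₂) n₂).2, Bc, if_neg (by omega)]
  have hsub : n₁ + n₂ - n₂ = n₁ := by omega
  simp only [hsub]
  rw [← Finset.sum_subset (Finset.range_subset_range.mpr (by omega :
      min n₁ (n₂ - 1) + 1 ≤ n₁ + n₂))]
  · refine Finset.sum_congr rfl fun i hi => ?_
    have hi' : i ≤ min n₁ (n₂ - 1) := by
      have := Finset.mem_range.mp hi; omega
    have hi1 : i ≤ n₁ := le_trans hi' (min_le_left _ _)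
    have hi2 : i ≤ n₂ - 1 := le_trans hi' (min_le_right _ _)
    rw [Nat.cast_choose ℝ hi1, Nat.cast_choose ℝ hi2]
    have e1 : n₂ - 1 - i = n₂ - i - 1 := by omega
    rw [e1]
    ring
  · intro i _ hi
    have hi' : min n₁ (n₂ - 1) + 1 ≤ i := by
      by_contra h
      exact hi (Finset.mem_range.mpr (by omega))
    by_cases hc : i ≤ n₁
    · have : (n₂ - 1).choose i = 0 := Nat.choose_eq_zero_of_lt (by omega)
      rw [this]
      push_cast
      ring
    · have : n₁.choose i = 0 := Nat.choose_eq_zero_of_lt (by omega)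
      rw [this]
      push_cast
      ring


lemma st_inj {b b' : Bool} (h : st b = st b') : b = b' := by
  cases b <;> cases b' <;> simp_all [st]

lemma cnt_eq_sum (n : ℕ) (s : Fin n → Bool) :
    cnt n s = ∑ i ∈ Finset.range n, if pf n s (i + 1) = 2 then 1 else 0 := by
  rw [← Fin.sum_univ_eq_sum_range (fun i => if pf n s (i + 1) = 2 then (1 : ℕ) else 0) n, cnt]
  refine Finset.sum_congr rfl fun k _ => ?_
  rw [pf_succ n s k.val k.isLt]
  have : (⟨k.val, k.isLt⟩ : Fin n) = k := rfl
  rw [this]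
  cases hk : s k <;> simp [st]

lemma sum_Icc_two (n : ℕ) (s : Fin n → Bool) :
    (∑ m ∈ Finset.Icc 1 n, if pf n s m = 2 then 1 else 0) = cnt n s := by
  rw [← Finset.Ico_add_one_right_eq_Icc, Finset.sum_Ico_eq_sum_range, cnt_eq_sum]
  have h : n + 1 - 1 = n := by omega
  rw [h]
  exact Finset.sum_congr rfl fun i _ => by rw [Nat.add_comm 1 i]

lemma sum_Icc_one (n : ℕ) (s : Fin n → Bool) :
    (∑ m ∈ Finset.Icc 1 n, if pf n s m = 1 then 1 else 0) = n - cnt n s := by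
  have hpair : (∑ m ∈ Finset.Icc 1 n, ((if pf n s m = 1 then 1 else 0)
      + (if pf n s m = 2 then 1 else 0))) = n := by
    rw [Finset.sum_congr rfl (fun m _ => show _ = 1 from by
      rcases pf_mem n s m with h | h <;> rw [h] <;> norm_num)]
    simp [Nat.card_Icc]
  rw [Finset.sum_add_distrib, sum_Icc_two] at hpair
  have hc : cnt n s ≤ n := by
    rw [cnt]
    calc (∑ k : Fin n, if s k then 1 else 0) ≤ ∑ _k : Fin n, 1 :=
      Finset.sum_le_sum fun k _ => by split <;> omega
    _ = n := by simp
  omega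

end MCaux

open MCaux

/-- **Combinatorial Markov chain identity (3.4)/(we1)**: for a time-homogeneous Markov
chain `X` on the state space `{1,2,3}` with transition probabilities `d i l`, started at
`1`, and any `n₁, n₂ ≥ 1`,
`P¹(∑_{m=1}^{n₁+n₂} 1{X_m=1} = n₁, ∑_{m=1}^{n₁+n₂} 1{X_m=2} = n₂, X_{n₁+n₂} = 2)
  = ∑_{0 ≤ i ≤ n₁ ∧ (n₂-1)} d₁₁^{n₁-i} d₁₂^{i+1} (n₁!/((n₁-i)! i!))
      d₂₁^i d₂₂^{n₂-i-1} ((n₂-1)!/((n₂-i-1)! i!))`. -/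
theorem markov_chain_visits_end_at_two {Ω : Type*} [MeasurableSpace Ω]
    (μ : Measure Ω) [IsProbabilityMeasure μ]
    (X : ℕ → Ω → ℕ) (hX : ∀ m, Measurable (X m))
    (d : ℕ → ℕ → ℝ) (hd0 : ∀ i l, 0 ≤ d i l)
    (hdsum : ∀ i ∈ ({1, 2, 3} : Set ℕ), d i 1 + d i 2 + d i 3 = 1)
    (hrange : ∀ m ω, X m ω ∈ ({1, 2, 3} : Set ℕ))
    -- the law of `X` is that of the Markov chain with transition matrix `d` started at `1`
    (hpath : ∀ (m : ℕ) (f : ℕ → ℕ), (∀ k, f k ∈ ({1, 2, 3} : Set ℕ)) →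
      μ {ω | ∀ k ≤ m, X k ω = f k} =
        ENNReal.ofReal (if f 0 = 1 then ∏ k ∈ Finset.range m, d (f k) (f (k + 1)) else 0))
    (n₁ n₂ : ℕ) (hn₁ : 1 ≤ n₁) (hn₂ : 1 ≤ n₂) :
    (μ {ω | (∑ m ∈ Finset.Icc 1 (n₁ + n₂), if X m ω = 1 then 1 else 0) = n₁ ∧
            (∑ m ∈ Finset.Icc 1 (n₁ + n₂), if X m ω = 2 then 1 else 0) = n₂ ∧
            X (n₁ + n₂) ω = 2}).toReal =
      ∑ i ∈ Finset.range (min n₁ (n₂ - 1) + 1),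
        d 1 1 ^ (n₁ - i) * d 1 2 ^ (i + 1) *
          ((n₁.factorial : ℝ) / ((n₁ - i).factorial * i.factorial)) *
        (d 2 1 ^ i * d 2 2 ^ (n₂ - i - 1) *
          (((n₂ - 1).factorial : ℝ) / ((n₂ - i - 1).factorial * i.factorial))) := by
  classical
  set n := n₁ + n₂ with hn
  have hn1 : 1 ≤ n := by omega
  set G : Finset (Fin n → Bool) :=
    Finset.univ.filter (fun s => cnt n s = n₂ ∧ pf n s n = 2) with hG
  set Cyl : (Fin n → Bool) → Set Ω := fun s => {ω | ∀ k ≤ n, X k ω = pf n s k} with hCyl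
  -- null sets for X 0 ≠ 1
  have hnull : ∀ v : ℕ, v ∈ ({1, 2, 3} : Set ℕ) → v ≠ 1 → μ {ω | X 0 ω = v} = 0 := by
    intro v hv hv1
    have h := hpath 0 (fun _ => v) (fun _ => hv)
    have hset : {ω | ∀ k ≤ 0, X k ω = v} = {ω | X 0 ω = v} := by
      ext ω
      constructor
      · exact fun h => h 0 le_rfl
      · intro h k hk
        have : k = 0 := Nat.le_zero.mp hk
        rw [this]
        exact h
    rw [hset] at h
    rw [h, if_neg hv1, ENNReal.ofReal_zero]
  -- the event set
  set E : Set Ω := {ω | (∑ m ∈ Finset.Icc 1 n, if X m ω = 1 then 1 else 0) = n₁ ∧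
      (∑ m ∈ Finset.Icc 1 n, if X m ω = 2 then 1 else 0) = n₂ ∧ X n ω = 2} with hE
  -- forward inclusion
  have hr : ∀ m ω, X m ω = 1 ∨ X m ω = 2 ∨ X m ω = 3 := by
    intro m ω
    have := hrange m ω
    simpa [Set.mem_insert_iff] using this
  have hsub : E ⊆ (⋃ s ∈ G, Cyl s) ∪ ({ω | X 0 ω = 2} ∪ {ω | X 0 ω = 3}) := by
    intro ω hω
    obtain ⟨hω1, hω2, hω3⟩ := hω
    rcases hr 0 ω with h0 | h0 | h0
    rotate_left
    · exact Or.inr (Or.inl h0)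
    · exact Or.inr (Or.inr h0)
    -- X 0 ω = 1
    left
    have hkey : ∀ m ∈ Finset.Icc 1 n, X m ω = 1 ∨ X m ω = 2 := by
      have hsum : (∑ m ∈ Finset.Icc 1 n,
          ((if X m ω = 1 then 1 else 0) + (if X m ω = 2 then 1 else 0))) =
          ∑ m ∈ Finset.Icc 1 n, 1 := by
        rw [Finset.sum_add_distrib, hω1, hω2]
        simp [Nat.card_Icc, hn]
      have hle : ∀ m ∈ Finset.Icc 1 n,
          ((if X m ω = 1 then 1 else 0) + (if X m ω = 2 then 1 else 0)) ≤ 1 := by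
        intro m _
        rcases hr m ω with h | h | h <;> rw [h] <;> norm_num
      have heq := (Finset.sum_eq_sum_iff_of_le hle).mp hsum
      intro m hm
      have h1 := heq m hm
      rcases hr m ω with h | h | h
      · exact Or.inl h
      · exact Or.inr h
      · rw [h] at h1
        norm_num at h1
    have hgen : ∀ k, 1 ≤ k → k ≤ n →
        X k ω = pf n (fun j : Fin n => decide (X (j.val + 1) ω = 2)) k := by
      intro k hk1 hk2
      have e : k - 1 + 1 = k := by omega
      unfold pf
      rw [dif_pos ⟨hk1, hk2⟩]
      simp only [e]
      rcases hkey k (Finset.mem_Icc.mpr ⟨hk1, hk2⟩) with h | h <;> simp [h, st]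
    refine Set.mem_biUnion (show (fun j : Fin n => decide (X (j.val + 1) ω = 2)) ∈ G from ?_) ?_
    · rw [hG, Finset.mem_filter]
      refine ⟨Finset.mem_univ _, ?_, ?_⟩
      · rw [cnt_eq_sum, ← hω2, ← Finset.Ico_add_one_right_eq_Icc, Finset.sum_Ico_eq_sum_range]
        have h : n + 1 - 1 = n := by omega
        rw [h]
        refine Finset.sum_congr rfl fun i hi => ?_
        have hi' : i < n := Finset.mem_range.mp hi
        rw [pf_succ n _ i hi']
        simp only [Nat.add_comm 1 i]
        by_cases h2 : X (i + 1) ω = 2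
        · simp [h2, st]
        · simp [h2, st]
      · rw [pf_last n hn1]
        have h5 : n - 1 + 1 = n := by omega
        simp [h5, hω3, st]
    · intro k hk
      rcases Nat.eq_zero_or_pos k with rfl | hk1
      · rw [pf_zero]; exact h0
      · exact hgen k hk1 hk
  -- reverse inclusion
  have hsup : (⋃ s ∈ G, Cyl s) ⊆ E := by
    intro ω hω
    obtain ⟨s, hsG, hcyl⟩ := Set.mem_iUnion₂.mp hω
    rw [hG, Finset.mem_filter] at hsG
    obtain ⟨-, hcnt, hend⟩ := hsG
    have hXeq : ∀ m ∈ Finset.Icc 1 n, X m ω = pf n s m := fun m hm =>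
      hcyl m (Finset.mem_Icc.mp hm).2
    refine ⟨?_, ?_, ?_⟩
    · rw [Finset.sum_congr rfl fun m hm => by rw [hXeq m hm], sum_Icc_one, hcnt]
      omega
    · rw [Finset.sum_congr rfl fun m hm => by rw [hXeq m hm], sum_Icc_two, hcnt]
    · rw [hcyl n le_rfl, hend]
  -- measure equality with union
  have hEU : μ E = μ (⋃ s ∈ G, Cyl s) := by
    refine le_antisymm ?_ (measure_mono hsup)
    calc μ E ≤ μ ((⋃ s ∈ G, Cyl s) ∪ ({ω | X 0 ω = 2} ∪ {ω | X 0 ω = 3})) :=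
          measure_mono hsub
      _ ≤ μ (⋃ s ∈ G, Cyl s) + μ ({ω | X 0 ω = 2} ∪ {ω | X 0 ω = 3}) :=
          measure_union_le _ _
      _ ≤ μ (⋃ s ∈ G, Cyl s) + (μ {ω | X 0 ω = 2} + μ {ω | X 0 ω = 3}) := by
          gcongr
          exact measure_union_le _ _
      _ = μ (⋃ s ∈ G, Cyl s) := by
          rw [hnull 2 (by norm_num) (by norm_num), hnull 3 (by norm_num) (by norm_num)]
          simp
  -- disjointness and measurability
  have hdisj : Set.PairwiseDisjoint (↑G : Set (Fin n → Bool)) Cyl := by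
    intro s _ t _ hst
    rw [Function.onFun, Set.disjoint_left]
    intro ω hs ht
    apply hst
    funext k
    apply st_inj (b := s k) (b' := t k)
    rw [← pf_succ n s k.val k.isLt, ← pf_succ n t k.val k.isLt,
      ← hs (k.val + 1) (by omega), ← ht (k.val + 1) (by omega)]
  have hmeas : ∀ s ∈ G, MeasurableSet (Cyl s) := by
    intro s _
    have : Cyl s = ⋂ k ∈ Set.Iic n, (X k) ⁻¹' {pf n s k} := by
      ext ω
      simp [hCyl, Set.mem_iInter]
    rw [this]
    exact MeasurableSet.biInter (Set.to_countable _)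
      (fun k _ => (hX k) (measurableSet_singleton _))
  -- cylinder measures
  have hW0 : ∀ s : Fin n → Bool, 0 ≤ W d n s :=
    fun s => Finset.prod_nonneg fun k _ => hd0 _ _
  have hCylval : ∀ s ∈ G, μ (Cyl s) = ENNReal.ofReal (W d n s) := by
    intro s _
    have h := hpath n (pf n s) (fun k => by
      rcases pf_mem n s k with h | h <;> rw [h] <;> simp)
    rw [hCyl]
    rw [h, if_pos (pf_zero n s)]
    rfl
  rw [hE] at hEU
  rw [hEU, measure_biUnion_finset hdisj hmeas, Finset.sum_congr rfl hCylval,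
    ← ENNReal.ofReal_sum_of_nonneg (fun s _ => hW0 s),
    ENNReal.toReal_ofReal (Finset.sum_nonneg fun s _ => hW0 s)]
  have hSB : ∑ s ∈ G, W d n s = SB d n n₂ := by
    rw [hG, Finset.sum_filter, SB]
  rw [hSB, hn, SB_closed d n₁ n₂ hn₁ hn₂]

end
end

section
/- For any n₁, n₂ ∈ ℕ, P^1( Σ_{m=1}^{n₁+n₂} 1{X_m=1} = n₁, Σ_{m=1}^{n₁+n₂} 1{X_m=2} = n₂, X_{n₁+n₂} = 1 ) = Σ_{1 ≤ i ≤ n₁ ∧ n₂} d_{1,1}^{n₁−i} d_{1,2}^{i} · (n₁!/((n₁−i)! i!)) · d_{2,1}^{i} d_{2,2}^{n₂−i} · ((n₂−1)!/((n₂−i)! (i−1)!)). -/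
/-!
Splitting the event according to the path `(X 0, …, X n)` turns its probability into a sum of
path weights `∏ d (p k) (p (k + 1))` over paths starting at `1`. Since the visits to `1` and `2`
fill all `n` steps, these paths never visit `3`, so only the two-state chain on `{1, 2}` matters.
Its path sums, for paths ending at `1` and at `2`, satisfy a coupled last-step recursion, and the
binomial closed forms satisfy the same recursion by Pascal's rule.
-/

open MeasureTheory Filter Set

noncomputable section

open Finset Fintype

namespace MarkovPath

variable {α : Type*}

def pathWeight (d : α → α → ℝ) {n : ℕ} (p : Fin (n + 1) → α) : ℝ :=
  ∏ k : Fin n, d (p k.castSucc) (p k.succ)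

theorem pathWeight_snoc (d : α → α → ℝ) {n : ℕ} (p : Fin (n + 1) → α) (x : α) :
    pathWeight d (Fin.snoc p x : Fin (n + 2) → α) = pathWeight d p * d (p (Fin.last n)) x := by
  simp only [pathWeight, Fin.prod_univ_castSucc, Fin.succ_castSucc, Fin.snoc_castSucc,
    Fin.succ_last, Fin.snoc_last]

theorem sum_piFinset_snoc {M : Type*} [AddCommMonoid M] (S : Finset α) {n : ℕ}
    (f : (Fin (n + 2) → α) → M) :
    ∑ q ∈ piFinset fun _ => S, f q = ∑ p ∈ piFinset fun _ => S, ∑ x ∈ S, f (Fin.snoc p x) := by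
  rw [← sum_product']
  refine sum_nbij' (fun q => (Fin.init q, q (Fin.last _))) (fun px => Fin.snoc px.1 px.2)
    ?_ ?_ ?_ ?_ ?_ <;> simp [Fin.forall_fin_succ', Fin.init]

theorem sum_Icc_one_eq_sum_range {M : Type*} [AddCommMonoid M] (f : ℕ → M) (n : ℕ) :
    ∑ m ∈ Icc 1 n, f m = ∑ m ∈ range n, f (m + 1) := by
  rw [← Finset.Ico_add_one_right_eq_Icc, sum_Ico_eq_sum_range, add_tsub_cancel_right]
  simp only [add_comm 1]

theorem measure_eq_sum_cylinders {Ω : Type*} [MeasurableSpace Ω] [MeasurableSpace α]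
    [MeasurableSingletonClass α] (μ : Measure Ω) {X : ℕ → Ω → α} (hX : ∀ m, Measurable (X m))
    {S : Finset α} (hS : ∀ m ω, X m ω ∈ S) {n : ℕ} (P : (Fin (n + 1) → α) → Prop)
    [DecidablePred P] :
    μ {ω | P fun k => X k ω} =
      ∑ p ∈ piFinset (fun _ => S) with P p, μ {ω | ∀ k : Fin (n + 1), X k ω = p k} := by
  set Y : Ω → Fin (n + 1) → α := fun ω k => X k ω
  have hY : Measurable Y := measurable_pi_lambda _ fun k => hX k
  have hcyl : ∀ p : Fin (n + 1) → α, {ω | ∀ k : Fin (n + 1), X k ω = p k} = Y ⁻¹' {p} :=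
    fun p => by ext ω; simp [Y, funext_iff]
  simp only [hcyl]
  rw [sum_measure_preimage_singleton _ fun p _ => hY (measurableSet_singleton p)]
  congr 1
  ext ω
  simp [Y, hS]

def binomTerm (x y : ℝ) (a k : ℕ) : ℝ :=
  a.choose k * x ^ (a - k) * y ^ k

theorem binomTerm_zero_right (x y : ℝ) (a : ℕ) : binomTerm x y a 0 = x ^ a := by
  simp [binomTerm]

theorem binomTerm_of_lt {a k : ℕ} (x y : ℝ) (h : a < k) : binomTerm x y a k = 0 := by
  simp [binomTerm, Nat.choose_eq_zero_of_lt h]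

theorem binomTerm_succ_succ (x y : ℝ) (a k : ℕ) :
    binomTerm x y (a + 1) (k + 1) = binomTerm x y a (k + 1) * x + binomTerm x y a k * y := by
  obtain h | rfl | h := lt_trichotomy a k
  · simp [binomTerm_of_lt, h, Nat.lt_succ_of_lt h]
  · simp [binomTerm, pow_succ]
  · obtain ⟨m, rfl⟩ := Nat.exists_eq_add_of_lt h
    simp only [binomTerm, Nat.choose_succ_succ, Nat.cast_add]
    rw [show k + m + 1 + 1 - (k + 1) = m + 1 by omega, show k + m + 1 - (k + 1) = m by omega,
      show k + m + 1 - k = m + 1 by omega]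
    ring

/- The two-state chain on `{i, j}`, started at `i`, with `a` visits to `i` and `c + 1` visits to
`j`: a path ending at `i` leaves `i` `a` times, `k + 1` of them towards `j`, and leaves `j` `c`
times before its last jump back to `i`, `k` of them towards `i`; a path ending at `j` leaves `i`
`a` times before its last jump to `j`, `k` of them towards `j`, and leaves `j` `c` times, `k` of
them towards `i`. -/
def returnWeight (d : α → α → ℝ) (i j : α) : ℕ → ℕ → ℝ
  | a, 0 => d i i ^ a
  | a, c + 1 => d j i * ∑ k ∈ range (c + 1),
      binomTerm (d i i) (d i j) a (k + 1) * binomTerm (d j j) (d j i) c k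

def crossWeight (d : α → α → ℝ) (i j : α) : ℕ → ℕ → ℝ
  | _, 0 => 0
  | a, c + 1 => d i j * ∑ k ∈ range (c + 1),
      binomTerm (d i i) (d i j) a k * binomTerm (d j j) (d j i) c k

theorem returnWeight_zero_succ (d : α → α → ℝ) (i j : α) (c : ℕ) :
    returnWeight d i j 0 (c + 1) = 0 := by
  simp [returnWeight, binomTerm_of_lt]

theorem returnWeight_succ_left (d : α → α → ℝ) (i j : α) (a b : ℕ) :
    returnWeight d i j (a + 1) b =
      returnWeight d i j a b * d i i + crossWeight d i j a b * d j i := by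
  rcases b with _ | c
  · simp [returnWeight, crossWeight, pow_succ]
  · have pascal : ∀ k,
        binomTerm (d i i) (d i j) (a + 1) (k + 1) * binomTerm (d j j) (d j i) c k =
          binomTerm (d i i) (d i j) a (k + 1) * binomTerm (d j j) (d j i) c k * d i i +
            binomTerm (d i i) (d i j) a k * binomTerm (d j j) (d j i) c k * d i j := fun k => by
      rw [binomTerm_succ_succ]; ring
    simp only [returnWeight, crossWeight, pascal, sum_add_distrib, ← sum_mul]
    ring

theorem crossWeight_succ_right (d : α → α → ℝ) (i j : α) (a b : ℕ) :
    crossWeight d i j a (b + 1) =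
      returnWeight d i j a b * d i j + crossWeight d i j a b * d j j := by
  rcases b with _ | c
  · simp [returnWeight, crossWeight, binomTerm_zero_right, mul_comm]
  · simp only [crossWeight, returnWeight]
    set u := binomTerm (d i i) (d i j) a
    set v := binomTerm (d j j) (d j i)
    have pascal : ∀ k, u (k + 1) * v (c + 1) (k + 1) =
        u (k + 1) * v c (k + 1) * d j j + u (k + 1) * v c k * d j i := fun k => by
      simp only [v, binomTerm_succ_succ]; ring
    have head : u 0 * v (c + 1) 0 = u 0 * v c 0 * d j j := by
      simp only [v, binomTerm_zero_right, pow_succ]; ring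
    have shift : ∑ k ∈ range (c + 1), u k * v c k =
        ∑ k ∈ range (c + 1), u (k + 1) * v c (k + 1) + u 0 * v c 0 := by
      rw [← sum_range_succ' (fun k => u k * v c k), sum_range_succ _ (c + 1),
        show v c (c + 1) = 0 from binomTerm_of_lt _ _ c.lt_succ_self, mul_zero, add_zero]
    rw [sum_range_succ', shift, head]
    simp only [pascal, sum_add_distrib, ← sum_mul]
    ring

theorem returnWeight_eq_sum_factorial (d : α → α → ℝ) (i j : α) (a : ℕ) {b : ℕ} (hb : b ≠ 0) :
    returnWeight d i j a b = ∑ k ∈ Icc 1 (min a b),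
      d i i ^ (a - k) * d i j ^ k * ((a.factorial : ℝ) / ((a - k).factorial * k.factorial)) *
        (d j i ^ k * d j j ^ (b - k) *
          (((b - 1).factorial : ℝ) / ((b - k).factorial * (k - 1).factorial))) := by
  obtain ⟨c, rfl⟩ := Nat.exists_eq_add_one_of_ne_zero hb
  have term : ∀ k ∈ Finset.Icc 1 (min a (c + 1)),
      d i i ^ (a - k) * d i j ^ k * ((a.factorial : ℝ) / ((a - k).factorial * k.factorial)) *
        (d j i ^ k * d j j ^ (c + 1 - k) *
          (((c + 1 - 1).factorial : ℝ) / ((c + 1 - k).factorial * (k - 1).factorial))) =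
      d j i * (binomTerm (d i i) (d i j) a k * binomTerm (d j j) (d j i) c (k - 1)) := by
    intro k hk
    obtain ⟨hk1, hka, hkc⟩ : 1 ≤ k ∧ k ≤ a ∧ k ≤ c + 1 := by
      simp only [Finset.mem_Icc, le_min_iff] at hk; omega
    obtain ⟨l, rfl⟩ := Nat.exists_eq_add_of_le' hk1
    simp only [binomTerm, Nat.cast_choose ℝ hka, Nat.cast_choose ℝ (by omega : l ≤ c),
      Nat.add_sub_cancel, Nat.add_sub_add_right]
    ring
  rw [Finset.sum_congr rfl term, sum_subset (Icc_subset_Icc_right (min_le_right a (c + 1))) ?_,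
    sum_Icc_one_eq_sum_range, returnWeight, mul_sum]
  · simp only [Nat.add_sub_cancel]
  · intro k hk hk'
    simp only [Finset.mem_Icc, le_min_iff, not_and, not_le] at hk hk'
    rw [binomTerm_of_lt _ _ (by omega : a < k), zero_mul, mul_zero]

variable [DecidableEq α]

def visits {n : ℕ} (p : Fin (n + 1) → α) (s : α) : ℕ :=
  #{k : Fin n | p k.succ = s}

theorem visits_snoc {n : ℕ} (p : Fin (n + 1) → α) (x s : α) :
    visits (Fin.snoc p x : Fin (n + 2) → α) s = visits p s + if x = s then 1 else 0 := by
  simp only [visits, card_filter, Fin.sum_univ_castSucc, Fin.succ_castSucc, Fin.snoc_castSucc,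
    Fin.succ_last, Fin.snoc_last]

theorem visits_eq_sum_Icc (x : ℕ → α) (n : ℕ) (s : α) :
    visits (fun k : Fin (n + 1) => x k) s = ∑ m ∈ Icc 1 n, if x m = s then 1 else 0 := by
  rw [visits, card_filter, sum_Icc_one_eq_sum_range]
  exact Fin.sum_univ_eq_sum_range (fun m => if x (m + 1) = s then 1 else 0) n

theorem mem_pair_of_visits_add_visits {n : ℕ} {p : Fin (n + 1) → α} {i j : α} (hij : i ≠ j)
    (h : visits p i + visits p j = n) (k : Fin n) : p k.succ = i ∨ p k.succ = j := by
  rw [visits, visits, ← card_union_of_disjoint (disjoint_filter.2 fun k _ hk => hk ▸ hij),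
    ← filter_or] at h
  exact card_filter_eq_iff.1 (by simpa using h) k (mem_univ k)

def pathSum (d : α → α → ℝ) (S : Finset α) (i j : α) (n a b : ℕ) (e : α) : ℝ :=
  ∑ p ∈ piFinset (fun _ : Fin (n + 1) => S) with
    p 0 = i ∧ visits p i = a ∧ visits p j = b ∧ p (Fin.last n) = e, pathWeight d p

theorem pathSum_succ (d : α → α → ℝ) (S : Finset α) (i j : α) (n a b : ℕ) {e : α}
    (he : e ∈ S) :
    pathSum d S i j (n + 1) a b e =
      ∑ p ∈ piFinset (fun _ : Fin (n + 1) => S) with p 0 = i ∧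
        visits p i + (if e = i then 1 else 0) = a ∧ visits p j + (if e = j then 1 else 0) = b,
        pathWeight d p * d (p (Fin.last n)) e := by
  rw [pathSum, sum_filter, sum_piFinset_snoc, sum_filter]
  refine sum_congr rfl fun p _ => ?_
  simp only [Fin.snoc_apply_zero, visits_snoc, pathWeight_snoc, Fin.snoc_last]
  rw [sum_eq_single_of_mem e he fun x _ hx => if_neg (by tauto)]
  simp

theorem pathSum_zero_self (d : α → α → ℝ) {S : Finset α} {i : α} (hi : i ∈ S) (j : α) :
    pathSum d S i j 0 0 0 i = 1 := by
  have : {p ∈ piFinset (fun _ : Fin 1 => S) |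
      p 0 = i ∧ visits p i = 0 ∧ visits p j = 0 ∧ p (Fin.last 0) = i} = {fun _ => i} := by
    ext p
    simp +contextual [visits, funext_iff, Fin.forall_fin_one, hi]
  rw [pathSum, this, sum_singleton, pathWeight, Fin.prod_univ_zero]

theorem pathSum_zero_of_ne (d : α → α → ℝ) (S : Finset α) {i j : α} (hij : i ≠ j) (a b : ℕ) :
    pathSum d S i j 0 a b j = 0 :=
  sum_eq_zero fun _ hp => absurd ((mem_filter.1 hp).2.1.symm.trans (mem_filter.1 hp).2.2.2.2) hij

theorem pathSum_succ_zero_left (d : α → α → ℝ) {S : Finset α} {i : α} (hi : i ∈ S) (j : α)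
    (n b : ℕ) : pathSum d S i j (n + 1) 0 b i = 0 := by
  simp [pathSum_succ d S i j n 0 b hi]

theorem pathSum_succ_zero_right (d : α → α → ℝ) {S : Finset α} (i : α) {j : α} (hj : j ∈ S)
    (n a : ℕ) : pathSum d S i j (n + 1) a 0 j = 0 := by
  simp [pathSum_succ d S i j n a 0 hj]

theorem pathSum_pair_succ (d : α → α → ℝ) {i j : α} (hij : i ≠ j) (n a b : ℕ) {e : α}
    (he : e ∈ ({i, j} : Finset α)) :
    pathSum d {i, j} i j (n + 1) (a + if e = i then 1 else 0) (b + if e = j then 1 else 0) e =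
      pathSum d {i, j} i j n a b i * d i e + pathSum d {i, j} i j n a b j * d j e := by
  rw [pathSum_succ d _ i j n _ _ he, pathSum, pathSum, sum_mul, sum_mul]
  simp only [add_left_inj]
  rw [← sum_filter_add_sum_filter_not _ fun p => p (Fin.last n) = i, filter_filter, filter_filter]
  congr 1 <;> refine sum_congr (filter_congr fun p hp => ?_) fun p hp => ?_
  · simp only [and_assoc]
  · rw [(mem_filter.1 hp).2.2.2.2]
  · have hlast := mem_piFinset.1 hp (Fin.last n)
    simp only [Finset.mem_insert, Finset.mem_singleton] at hlast
    rcases hlast with h | h <;> simp [h, hij, hij.symm]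
  · rw [(mem_filter.1 hp).2.2.2.2]

theorem pathSum_eq_pathSum_pair (d : α → α → ℝ) {S : Finset α} {i j : α} (hij : i ≠ j)
    (hS : {i, j} ⊆ S) {n a b : ℕ} (hab : a + b = n) (e : α) :
    pathSum d S i j n a b e = pathSum d {i, j} i j n a b e := by
  refine sum_congr ?_ fun _ _ => rfl
  ext p
  simp only [mem_filter, mem_piFinset]
  refine and_congr_left fun ⟨h0, ha, hb, _⟩ => ⟨fun _ k => ?_, fun h k => hS (h k)⟩
  refine Fin.cases ?_ (fun k => ?_) k
  · simp [h0]
  · simpa using mem_pair_of_visits_add_visits hij (ha ▸ hb ▸ hab) k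

theorem pathSum_pair_eq_returnWeight_crossWeight (d : α → α → ℝ) {i j : α} (hij : i ≠ j)
    (a b : ℕ) :
    pathSum d {i, j} i j (a + b) a b i = returnWeight d i j a b ∧
      pathSum d {i, j} i j (a + b) a b j = crossWeight d i j a b := by
  suffices ∀ n a b, a + b = n → pathSum d {i, j} i j n a b i = returnWeight d i j a b ∧
      pathSum d {i, j} i j n a b j = crossWeight d i j a b from this _ a b rfl
  intro n
  induction n with
  | zero =>
    intro a b hab
    obtain ⟨rfl, rfl⟩ : a = 0 ∧ b = 0 := by omega
    exact ⟨(pathSum_zero_self d (by simp) j).trans (pow_zero _).symm,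
      pathSum_zero_of_ne d _ hij 0 0⟩
  | succ n ih =>
    intro a b hab
    constructor
    · rcases a with _ | a
      · obtain rfl : b = n + 1 := by omega
        rw [pathSum_succ_zero_left d (by simp) j, returnWeight_zero_succ]
      · have step := pathSum_pair_succ d hij n a b (e := i) (by simp)
        simp only [if_pos, if_neg hij, add_zero] at step
        rw [step, (ih a b (by omega)).1, (ih a b (by omega)).2, returnWeight_succ_left]
    · rcases b with _ | b
      · exact pathSum_succ_zero_right d i (by simp) n a
      · have step := pathSum_pair_succ d hij n a b (e := j) (by simp)
        simp only [if_pos, if_neg hij.symm, add_zero] at step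
        rw [step, (ih a b (by omega)).1, (ih a b (by omega)).2, crossWeight_succ_right]

def HasPathLaw {Ω : Type*} [MeasurableSpace Ω] (μ : Measure Ω) (X : ℕ → Ω → α) (S : Finset α)
    (i₀ : α) (d : α → α → ℝ) : Prop :=
  ∀ (m : ℕ) (f : ℕ → α), (∀ k, f k ∈ S) → μ {ω | ∀ k ≤ m, X k ω = f k} =
    ENNReal.ofReal (if f 0 = i₀ then ∏ k ∈ range m, d (f k) (f (k + 1)) else 0)

theorem HasPathLaw.measure_cylinder {Ω : Type*} [MeasurableSpace Ω] {μ : Measure Ω}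
    {X : ℕ → Ω → α} {S : Finset α} {i₀ : α} {d : α → α → ℝ} (hlaw : HasPathLaw μ X S i₀ d)
    {n : ℕ} {p : Fin (n + 1) → α} (hp : ∀ k, p k ∈ S) :
    μ {ω | ∀ k : Fin (n + 1), X k ω = p k} =
      ENNReal.ofReal (if p 0 = i₀ then pathWeight d p else 0) := by
  have clamp_val : ∀ k (hk : k ≤ n), Fin.clamp k n = ⟨k, Nat.lt_succ_of_le hk⟩ := fun k hk =>
    Fin.ext (min_eq_left hk)
  convert hlaw n (fun k => p (Fin.clamp k n)) fun k => hp _ using 3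
  · simp +contextual [Fin.forall_iff, clamp_val]
  · simp [clamp_val]
  · rw [pathWeight, ← Fin.prod_univ_eq_prod_range]
    refine Fintype.prod_congr _ _ fun k => ?_
    rw [clamp_val k (by omega), clamp_val (k + 1) (by omega)]
    rfl

theorem HasPathLaw.toReal_measure_eq_sum_pathWeight {Ω : Type*} [MeasurableSpace Ω]
    [MeasurableSpace α] [MeasurableSingletonClass α] {μ : Measure Ω} {X : ℕ → Ω → α}
    {S : Finset α} {i₀ : α} {d : α → α → ℝ} (hlaw : HasPathLaw μ X S i₀ d)
    (hX : ∀ m, Measurable (X m)) (hS : ∀ m ω, X m ω ∈ S) (hd : ∀ s t, 0 ≤ d s t)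
    {n : ℕ} (P : (Fin (n + 1) → α) → Prop) [DecidablePred P] :
    (μ {ω | P fun k => X k ω}).toReal =
      ∑ p ∈ piFinset (fun _ => S) with p 0 = i₀ ∧ P p, pathWeight d p := by
  have hw : ∀ p : Fin (n + 1) → α, 0 ≤ if p 0 = i₀ then pathWeight d p else 0 := fun p => by
    split_ifs
    exacts [prod_nonneg fun k _ => hd _ _, le_rfl]
  rw [measure_eq_sum_cylinders μ hX hS,
    Finset.sum_congr rfl fun p hp => hlaw.measure_cylinder (mem_piFinset.1 (mem_filter.1 hp).1),
    ← ENNReal.ofReal_sum_of_nonneg fun p _ => hw p,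
    ENNReal.toReal_ofReal (sum_nonneg fun p _ => hw p), ← sum_filter, filter_filter]
  exact Finset.sum_congr (filter_congr fun _ _ => and_comm) fun _ _ => rfl

end MarkovPath

open MarkovPath in
theorem markov_chain_visits_end_at_one_general {Ω : Type*} [MeasurableSpace Ω]
    (μ : Measure Ω)
    (X : ℕ → Ω → ℕ) (hX : ∀ m, Measurable (X m))
    (d : ℕ → ℕ → ℝ) (hd0 : ∀ i l, 0 ≤ d i l)
    (hrange : ∀ m ω, X m ω ∈ ({1, 2, 3} : Set ℕ))
    -- the law of `X` is that of the Markov chain with transition matrix `d` started at `1`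
    (hpath : ∀ (m : ℕ) (f : ℕ → ℕ), (∀ k, f k ∈ ({1, 2, 3} : Set ℕ)) →
      μ {ω | ∀ k ≤ m, X k ω = f k} =
        ENNReal.ofReal (if f 0 = 1 then ∏ k ∈ Finset.range m, d (f k) (f (k + 1)) else 0))
    (n₁ n₂ : ℕ) (hn₂ : 1 ≤ n₂) :
    (μ {ω | (∑ m ∈ Finset.Icc 1 (n₁ + n₂), if X m ω = 1 then 1 else 0) = n₁ ∧
            (∑ m ∈ Finset.Icc 1 (n₁ + n₂), if X m ω = 2 then 1 else 0) = n₂ ∧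
            X (n₁ + n₂) ω = 1}).toReal =
      ∑ i ∈ Finset.Icc 1 (min n₁ n₂),
        d 1 1 ^ (n₁ - i) * d 1 2 ^ i *
          ((n₁.factorial : ℝ) / ((n₁ - i).factorial * i.factorial)) *
        (d 2 1 ^ i * d 2 2 ^ (n₂ - i) *
          (((n₂ - 1).factorial : ℝ) / ((n₂ - i).factorial * (i - 1).factorial))) := by
  have hS : ∀ m ω, X m ω ∈ ({1, 2, 3} : Finset ℕ) := by simpa using hrange
  have hlaw : HasPathLaw μ X {1, 2, 3} 1 d := fun m f hf => hpath m f (by simpa using hf)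
  let P : (Fin (n₁ + n₂ + 1) → ℕ) → Prop := fun p =>
    visits p 1 = n₁ ∧ visits p 2 = n₂ ∧ p (Fin.last _) = 1
  calc _ = (μ {ω | P fun k => X k ω}).toReal := by
        congr; ext ω; simp only [P, visits_eq_sum_Icc (X · ω), Fin.val_last]
    _ = pathSum d {1, 2, 3} 1 2 (n₁ + n₂) n₁ n₂ 1 :=
        hlaw.toReal_measure_eq_sum_pathWeight hX hS hd0 P
    _ = pathSum d {1, 2} 1 2 (n₁ + n₂) n₁ n₂ 1 :=
        pathSum_eq_pathSum_pair d (by decide) (by simp) rfl 1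
    _ = returnWeight d 1 2 n₁ n₂ := (pathSum_pair_eq_returnWeight_crossWeight d (by decide) n₁ n₂).1
    _ = _ := returnWeight_eq_sum_factorial d 1 2 n₁ (by omega)

/-- **Combinatorial Markov chain identity (we2)**: for a time-homogeneous Markov chain
`X` on the state space `{1,2,3}` with transition probabilities `d i l`, started at `1`,
and any `n₁, n₂ ≥ 1`,
`P¹(∑_{m=1}^{n₁+n₂} 1{X_m=1} = n₁, ∑_{m=1}^{n₁+n₂} 1{X_m=2} = n₂, X_{n₁+n₂} = 1)
  = ∑_{1 ≤ i ≤ n₁ ∧ n₂} d₁₁^{n₁-i} d₁₂^i (n₁!/((n₁-i)! i!))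
      d₂₁^i d₂₂^{n₂-i} ((n₂-1)!/((n₂-i)! (i-1)!))`. -/
theorem markov_chain_visits_end_at_one {Ω : Type*} [MeasurableSpace Ω]
    (μ : Measure Ω) [IsProbabilityMeasure μ]
    (X : ℕ → Ω → ℕ) (hX : ∀ m, Measurable (X m))
    (d : ℕ → ℕ → ℝ) (hd0 : ∀ i l, 0 ≤ d i l)
    (hdsum : ∀ i ∈ ({1, 2, 3} : Set ℕ), d i 1 + d i 2 + d i 3 = 1)
    (hrange : ∀ m ω, X m ω ∈ ({1, 2, 3} : Set ℕ))
    -- the law of `X` is that of the Markov chain with transition matrix `d` started at `1`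
    (hpath : ∀ (m : ℕ) (f : ℕ → ℕ), (∀ k, f k ∈ ({1, 2, 3} : Set ℕ)) →
      μ {ω | ∀ k ≤ m, X k ω = f k} =
        ENNReal.ofReal (if f 0 = 1 then ∏ k ∈ Finset.range m, d (f k) (f (k + 1)) else 0))
    (n₁ n₂ : ℕ) (hn₁ : 1 ≤ n₁) (hn₂ : 1 ≤ n₂) :
    (μ {ω | (∑ m ∈ Finset.Icc 1 (n₁ + n₂), if X m ω = 1 then 1 else 0) = n₁ ∧
            (∑ m ∈ Finset.Icc 1 (n₁ + n₂), if X m ω = 2 then 1 else 0) = n₂ ∧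
            X (n₁ + n₂) ω = 1}).toReal =
      ∑ i ∈ Finset.Icc 1 (min n₁ n₂),
        d 1 1 ^ (n₁ - i) * d 1 2 ^ i *
          ((n₁.factorial : ℝ) / ((n₁ - i).factorial * i.factorial)) *
        (d 2 1 ^ i * d 2 2 ^ (n₂ - i) *
          (((n₂ - 1).factorial : ℝ) / ((n₂ - i).factorial * (i - 1).factorial))) :=
  markov_chain_visits_end_at_one_general μ X hX d hd0 hrange hpath n₁ n₂ hn₂

end
end
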